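/- arXiv:1002.2900 — 7 statements merged into one kernel-verified Lean document; each statement's English description precedes it below -/
import Mathlib

section
/- Let q₂ > 0, r > 0, b ≠ 0, and let g₁, g₂, g₃, g₄, u₁, h : ℝ → ℝ with u₁, h differentiable, g₂(x₁) ≠ 0 for all x₁. Assume: (i) Q₁(x₁) - r·u₁(x₁)² - 2b⁻¹r·u₁(x₁)·g₃(x₁) = 0 for all x₁, where Q₁(x₁) ≥ 0; (ii) k₂ = √(q₂/r) (or k₂ = -√(q₂/r)); (iii) h'(x₁)·g₂(x₁) = -2r·k₂·(u₁(x₁) + b⁻¹g₃(x₁)) + 2r·b⁻¹·(u₁(x₁)·g₄(x₁) + u₁'(x₁)·g₁(x₁)) for all x₁. Define Q(x₁,x₂) = Q₁(x₁) + q₂x₂² + 2rb⁻¹(u₁'(x₁)g₂(x₁) - k₂g₄(x₁))x₂² - h'(x₁)g₁(x₁), u(x₁,x₂) = u₁(x₁) - k₂x₂, f₁ = g₁ + g₂·x₂, f₂ = g₃ + g₄·x₂, V_{x₁} = -2b⁻¹r·x₂·u₁'(x₁) + h'(x₁) and V_{x₂} = -2b⁻¹r·u(x₁,x₂). Then for all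 (x₁,x₂), the HJB residual Q(x₁,x₂) + r·u(x₁,x₂)² + V_{x₁}·f₁ + V_{x₂}·(f₂ + b·u(x₁,x₂)) vanishes. -/
/-- Theorem 3 (Case II): for dynamics affine in `x₂`, the feedback
`u = u₁(x₁) - k₂x₂` makes the HJB residual
`Q + r u² + V_{x₁} f₁ + V_{x₂} (f₂ + b u)` vanish identically, where
`V_{x₁} = -2b⁻¹r x₂ u₁'(x₁) + h'(x₁)` and `V_{x₂} = -2b⁻¹r u`. -/
theorem stmt_3 (q₂ r b k₂ : ℝ) (hq₂ : 0 < q₂) (hr : 0 < r) (hb : b ≠ 0)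
    (g₁ g₂ g₃ g₄ u₁ h Q₁ : ℝ → ℝ)
    (hu₁ : Differentiable ℝ u₁) (hh : Differentiable ℝ h)
    (hg₂ : ∀ x₁, g₂ x₁ ≠ 0)
    (hQ₁ : ∀ x₁, 0 ≤ Q₁ x₁)
    (hsub : ∀ x₁, Q₁ x₁ - r * (u₁ x₁) ^ 2 - 2 * b⁻¹ * r * u₁ x₁ * g₃ x₁ = 0)
    (hk₂ : k₂ = Real.sqrt (q₂ / r) ∨ k₂ = -Real.sqrt (q₂ / r))
    (hhp : ∀ x₁, deriv h x₁ * g₂ x₁ =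
      -2 * r * k₂ * (u₁ x₁ + b⁻¹ * g₃ x₁)
        + 2 * r * b⁻¹ * (u₁ x₁ * g₄ x₁ + deriv u₁ x₁ * g₁ x₁)) :
    ∀ x₁ x₂ : ℝ,
      (Q₁ x₁ + q₂ * x₂ ^ 2
          + 2 * r * b⁻¹ * (deriv u₁ x₁ * g₂ x₁ - k₂ * g₄ x₁) * x₂ ^ 2
          - deriv h x₁ * g₁ x₁)
        + r * (u₁ x₁ - k₂ * x₂) ^ 2
        + (-2 * b⁻¹ * r * x₂ * deriv u₁ x₁ + deriv h x₁) * (g₁ x₁ + g₂ x₁ * x₂)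
        + (-2 * b⁻¹ * r * (u₁ x₁ - k₂ * x₂))
            * ((g₃ x₁ + g₄ x₁ * x₂) + b * (u₁ x₁ - k₂ * x₂)) = 0 := by
  intro x₁ x₂
  have hsq : k₂ ^ 2 = q₂ / r := by
    rcases hk₂ with h' | h' <;> rw [h'] <;>
      simpa using Real.sq_sqrt (by positivity : (0:ℝ) ≤ q₂ / r)
  have hq : q₂ = r * k₂ ^ 2 := by field_simp at hsq ⊢; linarith [hsq]
  have h1 : Q₁ x₁ * b - r * u₁ x₁ ^ 2 * b - 2 * r * u₁ x₁ * g₃ x₁ = 0 := by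
    have := hsub x₁
    field_simp at this
    linear_combination this
  have h2 : deriv h x₁ * g₂ x₁ * b =
      -2 * r * k₂ * (u₁ x₁ * b + g₃ x₁)
        + 2 * r * (u₁ x₁ * g₄ x₁ + deriv u₁ x₁ * g₁ x₁) := by
    rw [hhp x₁]; field_simp
  rw [hq]
  field_simp
  linear_combination h1 + x₂ * h2
end

section
/- Let q₁, q₂ > 0 and take r = 1, so that k₁ = √q₁, k₂ = √q₂. Define for (x₁,x₂) ∈ ℝ²: V(x₁,x₂) = 2√q₁·x₁·x₂ + √q₂·(x₂² + √q₁·x₁²) + (√q₁/2)·x₁⁴. Then: (a) if q₂ ≥ 2√q₁, V is positive definite and radially unbounded on ℝ²; (b) along the closed-loop system ẋ₁ = -x₁³ + x₂, ẋ₂ = -√q₁·x₁ - √q₂·x₂, the derivative V_{x₁}·ẋ₁ + V_{x₂}·ẋ₂ equals the negative of L(x₁,x₂) = q₁x₁² + 2√(q₁q₂)x₁⁴ + 2√q₁x₁⁶ + (q₂ - 2√q₁)x₂² + (√q₁x₁ + √q₂x₂)², which is nonnegative when q₂ ≥ 2√q₁. -/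
open Real

set_option maxHeartbeats 2000000 in
/-- Strict-feedback example (r = 1): `V = 2√q₁ x₁x₂ + √q₂(x₂² + √q₁ x₁²) + (√q₁/2)x₁⁴`.
(a) If `q₂ ≥ 2√q₁` then `V` is positive definite and radially unbounded;
(b) along `ẋ₁ = -x₁³ + x₂, ẋ₂ = -√q₁ x₁ - √q₂ x₂` one has `V̇ = -L`, with `L ≥ 0`
when `q₂ ≥ 2√q₁`. -/
theorem stmt_4 (q₁ q₂ : ℝ) (hq₁ : 0 < q₁) (hq₂ : 0 < q₂)
    (V L : ℝ → ℝ → ℝ)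
    (hV : ∀ x₁ x₂, V x₁ x₂ =
      2 * Real.sqrt q₁ * x₁ * x₂ + Real.sqrt q₂ * (x₂ ^ 2 + Real.sqrt q₁ * x₁ ^ 2)
        + Real.sqrt q₁ / 2 * x₁ ^ 4)
    (hL : ∀ x₁ x₂, L x₁ x₂ =
      q₁ * x₁ ^ 2 + 2 * Real.sqrt (q₁ * q₂) * x₁ ^ 4 + 2 * Real.sqrt q₁ * x₁ ^ 6
        + (q₂ - 2 * Real.sqrt q₁) * x₂ ^ 2
        + (Real.sqrt q₁ * x₁ + Real.sqrt q₂ * x₂) ^ 2) :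
    (q₂ ≥ 2 * Real.sqrt q₁ →
      (V 0 0 = 0 ∧ (∀ x₁ x₂ : ℝ, (x₁, x₂) ≠ (0, 0) → 0 < V x₁ x₂) ∧
        Filter.Tendsto (fun p : ℝ × ℝ => V p.1 p.2) (Filter.cocompact (ℝ × ℝ))
          Filter.atTop)) ∧
    (∀ x₁ x₂ : ℝ,
      deriv (fun y => V y x₂) x₁ * (-x₁ ^ 3 + x₂)
        + deriv (fun y => V x₁ y) x₂ * (-Real.sqrt q₁ * x₁ - Real.sqrt q₂ * x₂)
        = -L x₁ x₂) ∧
    (q₂ ≥ 2 * Real.sqrt q₁ → ∀ x₁ x₂ : ℝ, 0 ≤ L x₁ x₂) := by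
  set a := Real.sqrt q₁ with ha_def
  set b := Real.sqrt q₂ with hb_def
  have ha : 0 < a := Real.sqrt_pos.mpr hq₁
  have hb : 0 < b := Real.sqrt_pos.mpr hq₂
  have ha2 : a ^ 2 = q₁ := Real.sq_sqrt hq₁.le
  have hb2 : b ^ 2 = q₂ := Real.sq_sqrt hq₂.le
  have hab : Real.sqrt (q₁ * q₂) = a * b := Real.sqrt_mul hq₁.le q₂
  refine ⟨?_, ?_, ?_⟩
  · intro hcond
    have hba : 2 * a ≤ b ^ 2 := by rw [hb2]; exact hcond
    refine ⟨by rw [hV]; ring, ?_, ?_⟩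
    · intro x₁ x₂ hne
      rw [hV]
      rcases eq_or_ne x₁ 0 with h1 | h1
      · have h2 : x₂ ≠ 0 := by
          intro h2; exact hne (by rw [h1, h2])
        have h3 : 0 < x₂ ^ 2 := by positivity
        subst h1
        nlinarith [mul_pos hb h3]
      · have h2 : 0 < x₁ ^ 2 := by positivity
        have h3 : 0 < b ^ 2 - a := by nlinarith
        nlinarith [sq_nonneg (a * x₁ + b * x₂), mul_pos (mul_pos ha h3) h2,
          mul_nonneg (mul_nonneg ha.le hb.le) (sq_nonneg (x₁ ^ 2)), hb]
    · set c := min a b / 2 with hc_def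
      have hc : 0 < c := by positivity
      have key : ∀ p : ℝ × ℝ, 1 ≤ ‖p‖ → c * ‖p‖ ^ 2 ≤ V p.1 p.2 := by
        rintro ⟨x₁, x₂⟩ hp
        dsimp only at hp ⊢
        have hnorm : ‖((x₁, x₂) : ℝ × ℝ)‖ = max |x₁| |x₂| := by
          simp [Prod.norm_def, Real.norm_eq_abs]
        rw [hnorm] at hp ⊢
        rw [hV]
        have hca : c ≤ a / 2 := by
          rw [hc_def]; gcongr; exact min_le_left _ _
        have hcb : c ≤ b / 2 := by
          rw [hc_def]; gcongr; exact min_le_right _ _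
        rcases le_total |x₂| |x₁| with hle | hle
        · rw [max_eq_left hle] at hp ⊢
          have h1 : 1 ≤ x₁ ^ 2 := by nlinarith [abs_nonneg x₁, sq_abs x₁]
          have h3 : 0 ≤ b ^ 2 - a := by nlinarith
          have h4 : 0 ≤ x₁ ^ 4 - x₁ ^ 2 := by nlinarith [sq_nonneg x₁]
          rw [sq_abs]
          nlinarith [sq_nonneg (a * x₁ + b * x₂),
            mul_nonneg (mul_nonneg ha.le h3) (sq_nonneg x₁),
            mul_nonneg (mul_nonneg ha.le hb.le) h4,
            mul_nonneg (mul_nonneg hb.le (by linarith : (0:ℝ) ≤ a / 2 - c)) (sq_nonneg x₁), hb]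
        · rw [max_eq_right hle] at hp ⊢
          rw [sq_abs]
          nlinarith [sq_nonneg (b * x₂ + 2 * a * x₁),
            mul_nonneg (mul_nonneg ha.le (sub_nonneg.mpr hba)) (sq_nonneg x₁),
            mul_nonneg (mul_nonneg ha.le hb.le) (sq_nonneg (x₁ ^ 2)),
            mul_nonneg (mul_nonneg hb.le (by linarith : (0:ℝ) ≤ b - 2 * c)) (sq_nonneg x₂), hb]
      have h2 : Filter.Tendsto (fun n : ℝ => c * n ^ 2) Filter.atTop Filter.atTop :=
        (Filter.tendsto_pow_atTop two_ne_zero).const_mul_atTop hc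
      have h1 : Filter.Tendsto (fun p : ℝ × ℝ => c * ‖p‖ ^ 2)
          (Filter.cocompact (ℝ × ℝ)) Filter.atTop :=
        h2.comp tendsto_norm_cocompact_atTop
      refine Filter.tendsto_atTop_mono' _ ?_ h1
      exact (tendsto_norm_cocompact_atTop.eventually_ge_atTop 1).mono key
  · intro x₁ x₂
    have hd1 : deriv (fun y => V y x₂) x₁ = 2 * a * x₂ + b * a * (2 * x₁) + a / 2 * (4 * x₁ ^ 3) := by
      have heq : (fun y => V y x₂) =
          fun y => (2 * a * x₂) * y + (b * x₂ ^ 2) + (b * a) * y ^ 2 + (a / 2) * y ^ 4 := by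
        funext y; rw [hV]; ring
      rw [heq]
      have h : HasDerivAt (fun y : ℝ => (2 * a * x₂) * y + (b * x₂ ^ 2) + (b * a) * y ^ 2
          + (a / 2) * y ^ 4) (2 * a * x₂ * 1 + (b * a) * (2 * x₁ ^ 1) + (a / 2) * (4 * x₁ ^ 3)) x₁ := by
        exact ((((hasDerivAt_id x₁).const_mul (2 * a * x₂)).add_const _).add
          ((hasDerivAt_pow 2 x₁).const_mul (b * a))).add
          (by simpa using (hasDerivAt_pow 4 x₁).const_mul (a / 2))
      rw [h.deriv]; ring
    have hd2 : deriv (fun y => V x₁ y) x₂ = 2 * a * x₁ + b * (2 * x₂) := by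
      have heq : (fun y => V x₁ y) =
          fun y => (2 * a * x₁) * y + b * y ^ 2 + (b * a * x₁ ^ 2 + a / 2 * x₁ ^ 4) := by
        funext y; rw [hV]; ring
      rw [heq]
      have h : HasDerivAt (fun y : ℝ => (2 * a * x₁) * y + b * y ^ 2
          + (b * a * x₁ ^ 2 + a / 2 * x₁ ^ 4)) (2 * a * x₁ * 1 + b * (2 * x₂ ^ 1)) x₂ :=
        (((hasDerivAt_id x₂).const_mul (2 * a * x₁)).add
          ((hasDerivAt_pow 2 x₂).const_mul b)).add_const _
      rw [h.deriv]; ring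
    rw [hd1, hd2, hL, hab, ← ha2, ← hb2]
    ring
  · intro hcond x₁ x₂
    have hba : 2 * a ≤ b ^ 2 := by rw [hb2]; exact hcond
    rw [hL, hab, ← ha2, ← hb2]
    have hba' : 0 ≤ b ^ 2 - 2 * a := by linarith
    nlinarith [sq_nonneg (a * x₁ + b * x₂),
      mul_nonneg (mul_nonneg ha.le hb.le) (sq_nonneg (x₁ ^ 2)),
      mul_nonneg ha.le (sq_nonneg (x₁ ^ 3)), mul_nonneg hba' (sq_nonneg x₂),
      mul_nonneg (mul_nonneg ha.le ha.le) (sq_nonneg x₁)]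
end

section
/- Define V(x₁,x₂) = (x₁ + x₂)² + x₂⁴/2 on ℝ². Then V(0,0) = 0, V > 0 away from the origin, V is radially unbounded, and along solutions of ẋ₁ = x₂³, ẋ₂ = -x₁ - x₂ - x₂³, one has V_{x₁}·x₂³ + V_{x₂}·(-x₁ - x₂ - x₂³) = -(x₁+x₂)² - x₂⁶ - (x₁ + x₂ + x₂³)², which is strictly negative for all (x₁,x₂) ≠ (0,0). -/
/-!
Completing the square makes `V = (x₁ + x₂)² + x₂⁴/2` a sum of nonnegative terms that vanish
together only at the origin, and along the closed loop `u = -x₁ - x₂ - x₂³` the orbital derivative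
is the negated running cost `(x₁ + x₂)² + x₂⁶ + u²`, again a sum of squares with the same
vanishing locus. Radial unboundedness comes from the quadratic lower bound
`‖x‖²/4 - 1 ≤ V x` (sup norm).
-/

open Filter

noncomputable def cubicLyapunov (x₁ x₂ : ℝ) : ℝ := (x₁ + x₂) ^ 2 + x₂ ^ 4 / 2

theorem add_ne_zero_or_ne_zero_of_ne_zero {x₁ x₂ : ℝ} (h : (x₁, x₂) ≠ (0, 0)) :
    x₁ + x₂ ≠ 0 ∨ x₂ ≠ 0 := by
  by_contra! hx
  obtain ⟨hsum, rfl⟩ := hx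
  exact h (by simpa using hsum)

theorem cubicLyapunov_pos {x₁ x₂ : ℝ} (h : (x₁, x₂) ≠ (0, 0)) : 0 < cubicLyapunov x₁ x₂ := by
  unfold cubicLyapunov
  rcases add_ne_zero_or_ne_zero_of_ne_zero h with hsum | h₂
  · have := Even.pow_pos even_two hsum
    positivity
  · have := Even.pow_pos (by decide : Even 4) h₂
    positivity

theorem Prod.sq_norm_le_sq_add_sq (p : ℝ × ℝ) : ‖p‖ ^ 2 ≤ p.1 ^ 2 + p.2 ^ 2 := by
  rw [Prod.norm_def, Real.norm_eq_abs, Real.norm_eq_abs]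
  rcases max_cases |p.1| |p.2| with ⟨h, -⟩ | ⟨h, -⟩ <;> rw [h, sq_abs] <;> nlinarith [sq_nonneg p.1, sq_nonneg p.2]

theorem quarter_mul_sq_norm_sub_one_le_cubicLyapunov (p : ℝ × ℝ) :
    1 / 4 * ‖p‖ ^ 2 - 1 ≤ cubicLyapunov p.1 p.2 := by
  unfold cubicLyapunov
  nlinarith [Prod.sq_norm_le_sq_add_sq p, sq_nonneg (p.1 + 2 * p.2), sq_nonneg (p.2 ^ 2 - 5 / 4)]

theorem tendsto_cocompact_atTop_of_sq_norm_le {E : Type*} [SeminormedAddGroup E] [ProperSpace E]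
    {f : E → ℝ} {a b : ℝ} (ha : 0 < a) (hf : ∀ x, a * ‖x‖ ^ 2 - b ≤ f x) :
    Tendsto f (cocompact E) atTop := by
  refine tendsto_atTop_mono hf (tendsto_atTop_add_const_right _ _ (Tendsto.const_mul_atTop ha ?_))
  exact (tendsto_pow_atTop two_ne_zero).comp tendsto_norm_cocompact_atTop

theorem tendsto_cubicLyapunov_cocompact :
    Tendsto (fun p : ℝ × ℝ => cubicLyapunov p.1 p.2) (cocompact (ℝ × ℝ)) atTop :=
  tendsto_cocompact_atTop_of_sq_norm_le (by norm_num) quarter_mul_sq_norm_sub_one_le_cubicLyapunov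

theorem hasDerivAt_cubicLyapunov_fst (x₁ x₂ : ℝ) :
    HasDerivAt (fun y => cubicLyapunov y x₂) (2 * (x₁ + x₂)) x₁ :=
  ((((hasDerivAt_id' x₁).add_const x₂).pow 2).add_const (x₂ ^ 4 / 2)).congr_deriv (by norm_num)

theorem hasDerivAt_cubicLyapunov_snd (x₁ x₂ : ℝ) :
    HasDerivAt (cubicLyapunov x₁) (2 * (x₁ + x₂) + 2 * x₂ ^ 3) x₂ :=
  ((((hasDerivAt_id' x₂).const_add x₁).pow 2).add ((hasDerivAt_pow 4 x₂).div_const 2)).congr_deriv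
    (by norm_num; ring)

theorem neg_runningCost_neg {x₁ x₂ : ℝ} (h : (x₁, x₂) ≠ (0, 0)) :
    -(x₁ + x₂) ^ 2 - x₂ ^ 6 - (x₁ + x₂ + x₂ ^ 3) ^ 2 < 0 := by
  rcases add_ne_zero_or_ne_zero_of_ne_zero h with hsum | h₂
  · have := Even.pow_pos even_two hsum
    nlinarith [sq_nonneg x₂, sq_nonneg (x₁ + x₂ + x₂ ^ 3)]
  · have := Even.pow_pos (by decide : Even 6) h₂
    nlinarith [sq_nonneg (x₁ + x₂), sq_nonneg (x₁ + x₂ + x₂ ^ 3)]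

/-- Cubic example: `V = (x₁+x₂)² + x₂⁴/2` vanishes at the origin, is positive away
from it, is radially unbounded, and along `ẋ₁ = x₂³, ẋ₂ = -x₁ - x₂ - x₂³` one has
`V̇ = -(x₁+x₂)² - x₂⁶ - (x₁+x₂+x₂³)²`, strictly negative off the origin. -/
theorem stmt_6 (V : ℝ → ℝ → ℝ)
    (hV : ∀ x₁ x₂, V x₁ x₂ = (x₁ + x₂) ^ 2 + x₂ ^ 4 / 2) :
    V 0 0 = 0 ∧
    (∀ x₁ x₂ : ℝ, (x₁, x₂) ≠ (0, 0) → 0 < V x₁ x₂) ∧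
    Filter.Tendsto (fun p : ℝ × ℝ => V p.1 p.2) (Filter.cocompact (ℝ × ℝ))
      Filter.atTop ∧
    (∀ x₁ x₂ : ℝ,
      deriv (fun y => V y x₂) x₁ * (x₂ ^ 3)
        + deriv (fun y => V x₁ y) x₂ * (-x₁ - x₂ - x₂ ^ 3)
        = -(x₁ + x₂) ^ 2 - x₂ ^ 6 - (x₁ + x₂ + x₂ ^ 3) ^ 2 ∧
      ((x₁, x₂) ≠ (0, 0) →
        -(x₁ + x₂) ^ 2 - x₂ ^ 6 - (x₁ + x₂ + x₂ ^ 3) ^ 2 < 0)) := by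
  obtain rfl : V = cubicLyapunov := funext₂ hV
  refine ⟨by norm_num [cubicLyapunov], fun _ _ => cubicLyapunov_pos,
    tendsto_cubicLyapunov_cocompact, fun x₁ x₂ => ⟨?_, neg_runningCost_neg⟩⟩
  rw [(hasDerivAt_cubicLyapunov_fst x₁ x₂).deriv, (hasDerivAt_cubicLyapunov_snd x₁ x₂).deriv]
  ring
end

section
/- Let a, b, c, d, r, q₁, q₂, k₁, k₂, k ∈ ℝ with r > 0, b ≠ 0, a ≠ 0, and suppose k₂² = q₂/r, k₁ = -c·a⁻¹·k₂, k = b⁻¹·(d + k₁/k₂), q₁ = q₂·c²·a⁻² + 2·r·b⁻²·c·(a·d - c), and k₂ ≠ 0. Let f : ℝ → ℝ be differentiable. Define u(x) = -k₁x₁ - k₂x₂ - k·f(x₂), V_{x₂}(x) = -2b⁻¹r·u(x), h'(x₁) = -2r[b⁻¹(k₁d + kc) - k₁k]·x₁, and V_{x₁}(x) = 2b⁻¹rk₁x₂ + h'(x₁). Then for all (x₁,x₂): q₁x₁² + q₂x₂² + q(x) + r·u(x)² + V_{x₁}·(a·x₁ + f(x₂)) + V_{x₂}·(c·x₁ + d·f(x₂)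 + b·u(x)) = 0, where q(x) = 2rk₁k₂x₁x₂ + rb⁻²(k₁²k₂⁻² - d²)·f(x₂)². -/
/-- Theorem 4 (Case III) HJB verification: for `ẋ₁ = ax₁ + f(x₂)`,
`ẋ₂ = cx₁ + d f(x₂) + bu` with `u = -k₁x₁ - k₂x₂ - k f(x₂)` and the stated gain
relations, the Hamiltonian with `V_{x₁} = 2b⁻¹rk₁x₂ + h'(x₁)`,
`h'(x₁) = -2r[b⁻¹(k₁d + kc) - k₁k] x₁`, `V_{x₂} = -2b⁻¹r u` is identically zero,
where `q(x) = 2rk₁k₂x₁x₂ + rb⁻²(k₁²k₂⁻² - d²) f(x₂)²`. -/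
theorem stmt_9 (a b c d r q₁ q₂ k₁ k₂ k : ℝ)
    (hr : 0 < r) (hb : b ≠ 0) (ha : a ≠ 0) (hk₂ : k₂ ≠ 0)
    (hk₂sq : k₂ ^ 2 = q₂ / r)
    (hk₁ : k₁ = -c * a⁻¹ * k₂)
    (hk : k = b⁻¹ * (d + k₁ / k₂))
    (hq₁ : q₁ = q₂ * c ^ 2 * a⁻¹ ^ 2 + 2 * r * b⁻¹ ^ 2 * c * (a * d - c))
    (f : ℝ → ℝ) (hf : Differentiable ℝ f) :
    ∀ x₁ x₂ : ℝ,
      let u := -k₁ * x₁ - k₂ * x₂ - k * f x₂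
      let h' := -2 * r * (b⁻¹ * (k₁ * d + k * c) - k₁ * k) * x₁
      let Vx₁ := 2 * b⁻¹ * r * k₁ * x₂ + h'
      let Vx₂ := -2 * b⁻¹ * r * u
      let q := 2 * r * k₁ * k₂ * x₁ * x₂
        + r * b⁻¹ ^ 2 * (k₁ ^ 2 * k₂⁻¹ ^ 2 - d ^ 2) * (f x₂) ^ 2
      q₁ * x₁ ^ 2 + q₂ * x₂ ^ 2 + q + r * u ^ 2
        + Vx₁ * (a * x₁ + f x₂)
        + Vx₂ * (c * x₁ + d * f x₂ + b * u) = 0 := by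
  intro x₁ x₂
  have hq₂ : q₂ = r * k₂ ^ 2 := by
    field_simp at hk₂sq; linarith
  subst hq₂ hk₁ hk hq₁
  simp only
  field_simp
  ring
end

section
/- Let r > 0, b ≠ 0, d ∈ ℝ, q₁ ≥ 0, q₂ ≥ 0, q₃ > 0, and set k₁ = √(q₁/r), k₂ = √(q₂/r), k₃ = √(q₃/r), k₄ = b⁻¹k₃⁻¹(k₁ + d·k₂), k₅ = b⁻¹k₃⁻¹k₂. Let f, g : ℝ → ℝ be differentiable with antiderivatives F, G (F' = f, G' = g). Define u(x) = -k₁x₁ - k₂x₂ - k₃x₃ - k₄f(x₂) - k₅g(x₃) and V(x) = rb⁻¹((k₁/√k₃)x₁ + (k₂/√k₃)x₂ + √k₃·x₃)² + 2b⁻¹r[b·k₄k₅(F(x₂)-F(0)) + k₄x₃f(x₂) + k₅(G(x₃)-G(0))], and Q(x) = 2rk₁k₂x₁x₂ + 2rk₁k₃x₁x₃ + 2rk₂k₃x₂x₃ + r(k₄² - 2dk₄k₅)f(x₂)² + rk₅²g(x₃)² - 2rb⁻¹k₄f'(x₂)x₃(df(x₂)+g(x₃)). Then for all x ∈ ℝ³: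 q₁x₁² + q₂x₂² + q₃x₃² + Q(x) + r·u(x)² + V_{x₁}·f(x₂) + V_{x₂}·(d·f(x₂) + g(x₃)) + V_{x₃}·b·u(x) = 0. -/
/-!
Differentiating `V` shows `b · V_{x₃} = -2 r u`, because `√k₃` times the linear form inside the
square is `k₁x₁ + k₂x₂ + k₃x₃`. Hence the last two terms of the HJB expression collapse to
`-r u²`. With `qᵢ = r kᵢ²` and the explicit `k₄, k₅`, expanding `r u²` leaves exactly the cross
terms collected in `Q` and the contributions of `V_{x₁}` and `V_{x₂}`, so everything cancels.
-/

open Real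

lemma mul_sqrt_div_sq {q r : ℝ} (hq : 0 ≤ q) (hr : 0 < r) : r * √(q / r) ^ 2 = q := by
  rw [sq_sqrt (div_nonneg hq hr.le)]
  field_simp

/-- The value function of the theorem, with `c` standing for `√k₃`. -/
noncomputable def hjbValue (r b c k₁ k₂ k₄ k₅ : ℝ) (f F G : ℝ → ℝ) (x₁ x₂ x₃ : ℝ) : ℝ :=
  r * b⁻¹ * (k₁ / c * x₁ + k₂ / c * x₂ + c * x₃) ^ 2
    + 2 * b⁻¹ * r * (b * k₄ * k₅ * (F x₂ - F 0) + k₄ * x₃ * f x₂ + k₅ * (G x₃ - G 0))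

section hjbValue

variable {r b c k₁ k₂ k₄ k₅ : ℝ} {f g F G : ℝ → ℝ} {x₁ x₂ x₃ : ℝ}

lemma hasDerivAt_hjbValue_fst :
    HasDerivAt (fun y => hjbValue r b c k₁ k₂ k₄ k₅ f F G y x₂ x₃)
      (2 * r * b⁻¹ * (k₁ / c) * (k₁ / c * x₁ + k₂ / c * x₂ + c * x₃)) x₁ := by
  have hlin : HasDerivAt (fun y => k₁ / c * y + k₂ / c * x₂ + c * x₃) (k₁ / c) x₁ := by
    simpa using (((hasDerivAt_id x₁).const_mul (k₁ / c)).add_const (k₂ / c * x₂)).add_const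
      (c * x₃)
  exact (((hlin.pow 2).const_mul (r * b⁻¹)).add_const _).congr_deriv (by push_cast; ring)

lemma hasDerivAt_hjbValue_snd (hF : HasDerivAt F (f x₂) x₂) (hf : DifferentiableAt ℝ f x₂) :
    HasDerivAt (fun y => hjbValue r b c k₁ k₂ k₄ k₅ f F G x₁ y x₃)
      (2 * r * b⁻¹ * (k₂ / c) * (k₁ / c * x₁ + k₂ / c * x₂ + c * x₃)
        + 2 * b⁻¹ * r * (b * k₄ * k₅ * f x₂ + k₄ * x₃ * deriv f x₂)) x₂ := by
  have hlin : HasDerivAt (fun y => k₁ / c * x₁ + k₂ / c * y + c * x₃) (k₂ / c) x₂ := by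
    simpa using (((hasDerivAt_id x₂).const_mul (k₂ / c)).const_add (k₁ / c * x₁)).add_const
      (c * x₃)
  have hrest : HasDerivAt (fun y => b * k₄ * k₅ * (F y - F 0) + k₄ * x₃ * f y + k₅ * (G x₃ - G 0))
      (b * k₄ * k₅ * f x₂ + k₄ * x₃ * deriv f x₂) x₂ :=
    (((hF.sub_const (F 0)).const_mul (b * k₄ * k₅)).add
      (hf.hasDerivAt.const_mul (k₄ * x₃))).add_const _
  exact (((hlin.pow 2).const_mul (r * b⁻¹)).add (hrest.const_mul (2 * b⁻¹ * r))).congr_deriv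
    (by push_cast; ring)

lemma hasDerivAt_hjbValue_thd (hG : HasDerivAt G (g x₃) x₃) :
    HasDerivAt (fun y => hjbValue r b c k₁ k₂ k₄ k₅ f F G x₁ x₂ y)
      (2 * r * b⁻¹ * c * (k₁ / c * x₁ + k₂ / c * x₂ + c * x₃)
        + 2 * b⁻¹ * r * (k₄ * f x₂ + k₅ * g x₃)) x₃ := by
  have hlin : HasDerivAt (fun y => k₁ / c * x₁ + k₂ / c * x₂ + c * y) c x₃ := by
    simpa using ((hasDerivAt_id x₃).const_mul c).const_add (k₁ / c * x₁ + k₂ / c * x₂)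
  have hrest : HasDerivAt (fun y => b * k₄ * k₅ * (F x₂ - F 0) + k₄ * y * f x₂ + k₅ * (G y - G 0))
      (k₄ * f x₂ + k₅ * g x₃) x₃ :=
    (((hasDerivAt_const x₃ _).add (((hasDerivAt_id x₃).const_mul k₄).mul_const (f x₂))).add
      ((hG.sub_const (G 0)).const_mul k₅)).congr_deriv (by simp)
  exact (((hlin.pow 2).const_mul (r * b⁻¹)).add (hrest.const_mul (2 * b⁻¹ * r))).congr_deriv
    (by push_cast; ring)

end hjbValue

theorem stmt_12_general (r b d q₁ q₂ q₃ k₁ k₂ k₃ k₄ k₅ : ℝ)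
    (hr : 0 < r) (hb : b ≠ 0)
    (hq₁ : 0 ≤ q₁) (hq₂ : 0 ≤ q₂) (hq₃ : 0 < q₃)
    (hk₁ : k₁ = Real.sqrt (q₁ / r)) (hk₂ : k₂ = Real.sqrt (q₂ / r))
    (hk₃ : k₃ = Real.sqrt (q₃ / r))
    (hk₄ : k₄ = b⁻¹ * k₃⁻¹ * (k₁ + d * k₂)) (hk₅ : k₅ = b⁻¹ * k₃⁻¹ * k₂)
    (f g F G : ℝ → ℝ)
    (hf : Differentiable ℝ f)
    (hF : ∀ x, HasDerivAt F (f x) x) (hG : ∀ x, HasDerivAt G (g x) x)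
    (u : ℝ → ℝ → ℝ → ℝ)
    (hu : ∀ x₁ x₂ x₃, u x₁ x₂ x₃ =
      -k₁ * x₁ - k₂ * x₂ - k₃ * x₃ - k₄ * f x₂ - k₅ * g x₃)
    (V : ℝ → ℝ → ℝ → ℝ)
    (hV : ∀ x₁ x₂ x₃, V x₁ x₂ x₃ =
      r * b⁻¹ * (k₁ / Real.sqrt k₃ * x₁ + k₂ / Real.sqrt k₃ * x₂
          + Real.sqrt k₃ * x₃) ^ 2
        + 2 * b⁻¹ * r * (b * k₄ * k₅ * (F x₂ - F 0) + k₄ * x₃ * f x₂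
          + k₅ * (G x₃ - G 0)))
    (Q : ℝ → ℝ → ℝ → ℝ)
    (hQ : ∀ x₁ x₂ x₃, Q x₁ x₂ x₃ =
      2 * r * k₁ * k₂ * x₁ * x₂ + 2 * r * k₁ * k₃ * x₁ * x₃
        + 2 * r * k₂ * k₃ * x₂ * x₃
        + r * (k₄ ^ 2 - 2 * d * k₄ * k₅) * (f x₂) ^ 2
        + r * k₅ ^ 2 * (g x₃) ^ 2
        - 2 * r * b⁻¹ * k₄ * deriv f x₂ * x₃ * (d * f x₂ + g x₃)) :
    ∀ x₁ x₂ x₃ : ℝ,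
      q₁ * x₁ ^ 2 + q₂ * x₂ ^ 2 + q₃ * x₃ ^ 2 + Q x₁ x₂ x₃
        + r * (u x₁ x₂ x₃) ^ 2
        + deriv (fun y => V y x₂ x₃) x₁ * f x₂
        + deriv (fun y => V x₁ y x₃) x₂ * (d * f x₂ + g x₃)
        + deriv (fun y => V x₁ x₂ y) x₃ * (b * u x₁ x₂ x₃) = 0 := by
  intro x₁ x₂ x₃
  have hk₃pos : 0 < k₃ := hk₃ ▸ sqrt_pos.mpr (div_pos hq₃ hr)
  have hc : √k₃ ^ 2 = k₃ := sq_sqrt hk₃pos.le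
  have hc₀ : √k₃ ≠ 0 := (sqrt_pos.mpr hk₃pos).ne'
  obtain rfl : V = hjbValue r b √k₃ k₁ k₂ k₄ k₅ f F G :=
    funext fun x₁ => funext fun x₂ => funext fun x₃ => hV x₁ x₂ x₃
  have hV₃ : deriv (fun y => hjbValue r b √k₃ k₁ k₂ k₄ k₅ f F G x₁ x₂ y) x₃ * b
      = -2 * r * u x₁ x₂ x₃ := by
    rw [(hasDerivAt_hjbValue_thd (hG x₃)).deriv, hu]
    field_simp
    rw [hc]
    ring
  rw [hasDerivAt_hjbValue_fst.deriv, (hasDerivAt_hjbValue_snd (hF x₂) (hf x₂)).deriv,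
    ← mul_assoc, hV₃, hQ, hu, ← mul_sqrt_div_sq hq₁ hr, ← mul_sqrt_div_sq hq₂ hr,
    ← mul_sqrt_div_sq hq₃.le hr, ← hk₁, ← hk₂, ← hk₃, hk₄, hk₅]
  generalize √k₃ = c at hc hc₀ ⊢
  subst hc
  field_simp
  ring

/-- Theorem 6 (third-order HJB verification): for `ẋ₁ = f(x₂)`,
`ẋ₂ = df(x₂)+g(x₃)`, `ẋ₃ = bu` with the stated gains, feedback `u`, value
function `V` and cost term `Q`, the stationary HJB equation holds. -/
theorem stmt_12 (r b d q₁ q₂ q₃ k₁ k₂ k₃ k₄ k₅ : ℝ)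
    (hr : 0 < r) (hb : b ≠ 0)
    (hq₁ : 0 ≤ q₁) (hq₂ : 0 ≤ q₂) (hq₃ : 0 < q₃)
    (hk₁ : k₁ = Real.sqrt (q₁ / r)) (hk₂ : k₂ = Real.sqrt (q₂ / r))
    (hk₃ : k₃ = Real.sqrt (q₃ / r))
    (hk₄ : k₄ = b⁻¹ * k₃⁻¹ * (k₁ + d * k₂)) (hk₅ : k₅ = b⁻¹ * k₃⁻¹ * k₂)
    (f g F G : ℝ → ℝ)
    (hf : Differentiable ℝ f) (hg : Differentiable ℝ g)
    (hF : ∀ x, HasDerivAt F (f x) x) (hG : ∀ x, HasDerivAt G (g x) x)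
    (u : ℝ → ℝ → ℝ → ℝ)
    (hu : ∀ x₁ x₂ x₃, u x₁ x₂ x₃ =
      -k₁ * x₁ - k₂ * x₂ - k₃ * x₃ - k₄ * f x₂ - k₅ * g x₃)
    (V : ℝ → ℝ → ℝ → ℝ)
    (hV : ∀ x₁ x₂ x₃, V x₁ x₂ x₃ =
      r * b⁻¹ * (k₁ / Real.sqrt k₃ * x₁ + k₂ / Real.sqrt k₃ * x₂
          + Real.sqrt k₃ * x₃) ^ 2
        + 2 * b⁻¹ * r * (b * k₄ * k₅ * (F x₂ - F 0) + k₄ * x₃ * f x₂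
          + k₅ * (G x₃ - G 0)))
    (Q : ℝ → ℝ → ℝ → ℝ)
    (hQ : ∀ x₁ x₂ x₃, Q x₁ x₂ x₃ =
      2 * r * k₁ * k₂ * x₁ * x₂ + 2 * r * k₁ * k₃ * x₁ * x₃
        + 2 * r * k₂ * k₃ * x₂ * x₃
        + r * (k₄ ^ 2 - 2 * d * k₄ * k₅) * (f x₂) ^ 2
        + r * k₅ ^ 2 * (g x₃) ^ 2
        - 2 * r * b⁻¹ * k₄ * deriv f x₂ * x₃ * (d * f x₂ + g x₃)) :
    ∀ x₁ x₂ x₃ : ℝ,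
      q₁ * x₁ ^ 2 + q₂ * x₂ ^ 2 + q₃ * x₃ ^ 2 + Q x₁ x₂ x₃
        + r * (u x₁ x₂ x₃) ^ 2
        + deriv (fun y => V y x₂ x₃) x₁ * f x₂
        + deriv (fun y => V x₁ y x₃) x₂ * (d * f x₂ + g x₃)
        + deriv (fun y => V x₁ x₂ y) x₃ * (b * u x₁ x₂ x₃) = 0 :=
  stmt_12_general r b d q₁ q₂ q₃ k₁ k₂ k₃ k₄ k₅ hr hb hq₁ hq₂ hq₃ hk₁ hk₂ hk₃ hk₄ hk₅ f g F G hf hF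
    hG u hu V hV Q hQ
end

section
/- Define V(x₁,x₂,x₃) = (x₁ + 2x₂ + x₃)² + 2x₃² + 2x₃·sin(x₂) - 4·cos(x₂) + 4 on ℝ³. Then along solutions of the closed-loop system ẋ₁ = sin(x₂), ẋ₂ = x₃, ẋ₃ = -x₁ - 2x₂ - 3x₃ - sin(x₂), the derivative of V equals -(4 - 2cos(x₂))x₃² - (x₁ + 2x₂ + x₃)² - sin²(x₂) - (x₁ + 2x₂ + 3x₃ + sin(x₂))², which is ≤ 0 everywhere and strictly negative whenever x₂ ∈ (-π, π) and (x₁,x₂,x₃) ≠ (0,0,0). -/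
open Real

/-!
`V` solves the Hamilton–Jacobi–Bellman equation of the problem: its derivative along the
closed loop is exactly `-L(x, u(x))`, a polynomial identity in `x₁, x₂, x₃, sin x₂, cos x₂`.
The running cost is nonnegative since `4 - 2 cos x₂ ≥ 2`, and it vanishes only when
`x₃ = sin x₂ = x₁ + 2 x₂ = 0`, which on `(-π, π)` forces `x = 0`.
-/

namespace Unicycle

noncomputable def lyapunov (x₁ x₂ x₃ : ℝ) : ℝ :=
  (x₁ + 2 * x₂ + x₃) ^ 2 + 2 * x₃ ^ 2 + 2 * x₃ * sin x₂ - 4 * cos x₂ + 4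

noncomputable def optimalControl (x₁ x₂ x₃ : ℝ) : ℝ := -x₁ - 2 * x₂ - 3 * x₃ - sin x₂

noncomputable def runningCost (x₁ x₂ x₃ u : ℝ) : ℝ :=
  (x₁ + 2 * x₂ + x₃) ^ 2 + (4 - 2 * cos x₂) * x₃ ^ 2 + sin x₂ ^ 2 + u ^ 2

variable (x₁ x₂ x₃ : ℝ)

theorem hasDerivAt_lyapunov_x₁ :
    HasDerivAt (fun y => lyapunov y x₂ x₃) (2 * (x₁ + 2 * x₂ + x₃)) x₁ := by
  have h := (((hasDerivAt_id' x₁).add_const (2 * x₂)).add_const x₃).pow 2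
  refine ((((h.add_const (2 * x₃ ^ 2)).add_const (2 * x₃ * sin x₂)).sub_const
    (4 * cos x₂)).add_const 4).congr_deriv ?_
  norm_num

theorem hasDerivAt_lyapunov_x₂ :
    HasDerivAt (fun y => lyapunov x₁ y x₃)
      (4 * (x₁ + 2 * x₂ + x₃) + 2 * x₃ * cos x₂ + 4 * sin x₂) x₂ := by
  have h := ((((hasDerivAt_id' x₂).const_mul 2).const_add x₁).add_const x₃).pow 2
  refine ((((h.add_const (2 * x₃ ^ 2)).add ((hasDerivAt_sin x₂).const_mul (2 * x₃))).sub
    ((hasDerivAt_cos x₂).const_mul 4)).add_const 4).congr_deriv ?_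
  norm_num
  ring

theorem hasDerivAt_lyapunov_x₃ :
    HasDerivAt (fun y => lyapunov x₁ x₂ y)
      (2 * (x₁ + 2 * x₂ + x₃) + 4 * x₃ + 2 * sin x₂) x₃ := by
  have h := ((hasDerivAt_id' x₃).const_add (x₁ + 2 * x₂)).pow 2
  refine ((((h.add (((hasDerivAt_id' x₃).pow 2).const_mul 2)).add
    (((hasDerivAt_id' x₃).const_mul 2).mul_const (sin x₂))).sub_const
    (4 * cos x₂)).add_const 4).congr_deriv ?_
  norm_num
  ring

theorem lyapunov_orbital_deriv :
    deriv (fun y => lyapunov y x₂ x₃) x₁ * sin x₂ + deriv (fun y => lyapunov x₁ y x₃) x₂ * x₃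
      + deriv (fun y => lyapunov x₁ x₂ y) x₃ * optimalControl x₁ x₂ x₃
      = -runningCost x₁ x₂ x₃ (optimalControl x₁ x₂ x₃) := by
  rw [(hasDerivAt_lyapunov_x₁ x₁ x₂ x₃).deriv, (hasDerivAt_lyapunov_x₂ x₁ x₂ x₃).deriv,
    (hasDerivAt_lyapunov_x₃ x₁ x₂ x₃).deriv, runningCost, optimalControl]
  ring

theorem runningCost_nonneg (u : ℝ) : 0 ≤ runningCost x₁ x₂ x₃ u := by
  have : 0 ≤ 4 - 2 * cos x₂ := by linarith [cos_le_one x₂]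
  unfold runningCost
  positivity

theorem runningCost_pos (u : ℝ) (hx₂ : x₂ ∈ Set.Ioo (-π) π)
    (hx : (x₁, x₂, x₃) ≠ (0, 0, 0)) : 0 < runningCost x₁ x₂ x₃ u := by
  refine (runningCost_nonneg x₁ x₂ x₃ u).lt_of_ne fun h => hx ?_
  have hc : 2 ≤ 4 - 2 * cos x₂ := by linarith [cos_le_one x₂]
  unfold runningCost at h
  have hp : x₁ + 2 * x₂ + x₃ = 0 := by nlinarith [sq_nonneg x₃, sq_nonneg (sin x₂), sq_nonneg u]
  have h₃ : x₃ = 0 := by nlinarith [sq_nonneg (sin x₂), sq_nonneg u]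
  have hs : sin x₂ = 0 := by nlinarith [sq_nonneg x₃, sq_nonneg u]
  have h₂ : x₂ = 0 := (sin_eq_zero_iff_of_lt_of_lt hx₂.1 hx₂.2).mp hs
  have h₁ : x₁ = 0 := by linarith
  simp [h₁, h₂, h₃]

end Unicycle

open Unicycle in
/-- Third-order unicycle example: along `ẋ₁ = sin x₂, ẋ₂ = x₃,
`ẋ₃ = -x₁-2x₂-3x₃-sin x₂`, the derivative of
`V = (x₁+2x₂+x₃)² + 2x₃² + 2x₃ sin x₂ - 4cos x₂ + 4` equals
`-(4-2cos x₂)x₃² - (x₁+2x₂+x₃)² - sin²x₂ - (x₁+2x₂+3x₃+sin x₂)² ≤ 0`,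
strictly negative for `x₂ ∈ (-π,π)`, `(x₁,x₂,x₃) ≠ 0`. -/
theorem stmt_13 (V : ℝ → ℝ → ℝ → ℝ)
    (hV : ∀ x₁ x₂ x₃, V x₁ x₂ x₃ =
      (x₁ + 2 * x₂ + x₃) ^ 2 + 2 * x₃ ^ 2 + 2 * x₃ * Real.sin x₂
        - 4 * Real.cos x₂ + 4) :
    ∀ x₁ x₂ x₃ : ℝ,
      (deriv (fun y => V y x₂ x₃) x₁ * Real.sin x₂
        + deriv (fun y => V x₁ y x₃) x₂ * x₃
        + deriv (fun y => V x₁ x₂ y) x₃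
            * (-x₁ - 2 * x₂ - 3 * x₃ - Real.sin x₂)
        = -(4 - 2 * Real.cos x₂) * x₃ ^ 2 - (x₁ + 2 * x₂ + x₃) ^ 2
          - Real.sin x₂ ^ 2 - (x₁ + 2 * x₂ + 3 * x₃ + Real.sin x₂) ^ 2) ∧
      (-(4 - 2 * Real.cos x₂) * x₃ ^ 2 - (x₁ + 2 * x₂ + x₃) ^ 2
          - Real.sin x₂ ^ 2 - (x₁ + 2 * x₂ + 3 * x₃ + Real.sin x₂) ^ 2 ≤ 0) ∧
      (x₂ ∈ Set.Ioo (-Real.pi) Real.pi → (x₁, x₂, x₃) ≠ (0, 0, 0) →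
        -(4 - 2 * Real.cos x₂) * x₃ ^ 2 - (x₁ + 2 * x₂ + x₃) ^ 2
          - Real.sin x₂ ^ 2 - (x₁ + 2 * x₂ + 3 * x₃ + Real.sin x₂) ^ 2 < 0) := by
  obtain rfl : V = lyapunov := funext fun x₁ => funext fun x₂ => funext (hV x₁ x₂)
  intro x₁ x₂ x₃
  have hL : -(4 - 2 * cos x₂) * x₃ ^ 2 - (x₁ + 2 * x₂ + x₃) ^ 2 - sin x₂ ^ 2
      - (x₁ + 2 * x₂ + 3 * x₃ + sin x₂) ^ 2
      = -runningCost x₁ x₂ x₃ (optimalControl x₁ x₂ x₃) := by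
    rw [runningCost, optimalControl]
    ring
  rw [hL]
  refine ⟨lyapunov_orbital_deriv x₁ x₂ x₃, ?_, fun hx₂ hx => ?_⟩
  · exact neg_nonpos.mpr (runningCost_nonneg x₁ x₂ x₃ _)
  · exact neg_neg_iff_pos.mpr (runningCost_pos x₁ x₂ x₃ _ hx₂ hx)
end

section
/- The function V(x₁,x₂,x₃) = (x₁ + 2x₂ + x₃)² + 2x₃² + 2x₃·sin(x₂) - 4·cos(x₂) + 4 satisfies V(0,0,0) = 0 and is positive definite on a neighborhood of the origin; in particular V(x₁,x₂,x₃) > 0 for all (x₁,x₂,x₃) ≠ 0 in the set {|x₂| < π/10, |x₃| < 15/π}. -/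
/-!
Completing the square in `x₃` and using `sin² x = (1 - cos x)(1 + cos x) ≤ 2 (1 - cos x)` gives
`2x₃² + 2x₃ sin x₂ - 4 cos x₂ + 4 ≥ 2 (x₃ + sin x₂ / 2)² + 3 (1 - cos x₂)`,
which vanishes only at `x₂ = x₃ = 0` as long as `|x₂| < 2π`. The remaining square
`(x₁ + 2x₂ + x₃)²` then takes care of the `x₁`-direction.
-/

open Real

noncomputable def angleEnergy (y z : ℝ) : ℝ := 2 * z ^ 2 + 2 * z * sin y - 4 * cos y + 4

lemma sin_sq_le_two_mul_one_sub_cos (x : ℝ) : sin x ^ 2 ≤ 2 * (1 - cos x) := by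
  nlinarith [sin_sq_add_cos_sq x, cos_le_one x, neg_one_le_cos x]

lemma angleEnergy_ge (y z : ℝ) :
    2 * (z + sin y / 2) ^ 2 + 3 * (1 - cos y) ≤ angleEnergy y z := by
  unfold angleEnergy
  nlinarith [sin_sq_le_two_mul_one_sub_cos y]

lemma angleEnergy_pos {y z : ℝ} (hy : |y| < 2 * π) (hyz : (y, z) ≠ (0, 0)) :
    0 < angleEnergy y z := by
  by_cases hy0 : y = 0
  · subst hy0
    have hz : z ≠ 0 := by simpa using hyz
    simpa [angleEnergy] using mul_pos two_pos (sq_pos_of_ne_zero hz)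
  · have hcos : cos y ≠ 1 := fun h ↦
      hy0 ((cos_eq_one_iff_of_lt_of_lt (abs_lt.1 hy).1 (abs_lt.1 hy).2).1 h)
    have hcos_lt : cos y < 1 := lt_of_le_of_ne (cos_le_one y) hcos
    nlinarith [angleEnergy_ge y z, sq_nonneg (z + sin y / 2)]

/-- The value function `V = (x₁+2x₂+x₃)² + 2x₃² + 2x₃ sin x₂ - 4cos x₂ + 4`
satisfies `V(0,0,0) = 0` and is positive at every nonzero point of the region
`{|x₂| < π/10, |x₃| < 15/π}`. -/
theorem stmt_14 (V : ℝ → ℝ → ℝ → ℝ)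
    (hV : ∀ x₁ x₂ x₃, V x₁ x₂ x₃ =
      (x₁ + 2 * x₂ + x₃) ^ 2 + 2 * x₃ ^ 2 + 2 * x₃ * Real.sin x₂
        - 4 * Real.cos x₂ + 4) :
    V 0 0 0 = 0 ∧
    ∀ x₁ x₂ x₃ : ℝ, |x₂| < Real.pi / 10 → |x₃| < 15 / Real.pi →
      (x₁, x₂, x₃) ≠ (0, 0, 0) → 0 < V x₁ x₂ x₃ := by
  refine ⟨by simp [hV], fun x₁ x₂ x₃ hx₂ _ hx ↦ ?_⟩
  have hV' : V x₁ x₂ x₃ = (x₁ + 2 * x₂ + x₃) ^ 2 + angleEnergy x₂ x₃ := by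
    rw [hV, angleEnergy]; ring
  rw [hV']
  by_cases h₂₃ : (x₂, x₃) = (0, 0)
  · obtain ⟨rfl, rfl⟩ := Prod.mk.inj h₂₃
    have hx₁ : x₁ ≠ 0 := by simpa using hx
    simpa [angleEnergy] using sq_pos_of_ne_zero hx₁
  · have hx₂' : |x₂| < 2 * π := by linarith [pi_pos]
    exact add_pos_of_nonneg_of_pos (sq_nonneg _) (angleEnergy_pos hx₂' h₂₃)
end
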